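/- Let f : ℝⁿ → ℝ and G : ℝⁿ → S^m be twice continuously differentiable. Suppose SOSC-NLP is satisfied at a KKT triple (x,Y,Λ) ∈ ℝⁿ × S^m × S^m of (P2). Then (x,Λ) is a KKT pair of (P1) which satisfies strict complementarity: rank G(x) + rank Λ = m. -/

import Mathlib

open Matrix

noncomputable section

def jmul {m : ℕ} (A B : Matrix (Fin m) (Fin m) ℝ) : Matrix (Fin m) (Fin m) ℝ :=
  (1 / 2 : ℝ) • (A * B + B * A)

def minner {m : ℕ} (A B : Matrix (Fin m) (Fin m) ℝ) : ℝ :=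
  (A * B).trace

def memPhi {m : ℕ} (Λ Y : Matrix (Fin m) (Fin m) ℝ) : Prop :=
  ∀ W : Matrix (Fin m) (Fin m) ℝ, W.IsSymm → W ≠ 0 → jmul Y W = 0 →
    0 < minner (jmul W W) Λ

def pderivG {n m : ℕ} (G : (Fin n → ℝ) → Matrix (Fin m) (Fin m) ℝ)
    (x : Fin n → ℝ) (k : Fin n) : Matrix (Fin m) (Fin m) ℝ :=
  Matrix.of fun i j => fderiv ℝ (fun y => G y i j) x (Pi.single k 1)

def dirDerivG {n m : ℕ} (G : (Fin n → ℝ) → Matrix (Fin m) (Fin m) ℝ)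
    (x v : Fin n → ℝ) : Matrix (Fin m) (Fin m) ℝ :=
  ∑ k, v k • pderivG G x k

def adjDG {n m : ℕ} (G : (Fin n → ℝ) → Matrix (Fin m) (Fin m) ℝ)
    (x : Fin n → ℝ) (W : Matrix (Fin m) (Fin m) ℝ) : Fin n → ℝ :=
  fun k => minner (pderivG G x k) W

def gradf {n : ℕ} (f : (Fin n → ℝ) → ℝ) (x : Fin n → ℝ) : Fin n → ℝ :=
  fun k => fderiv ℝ f x (Pi.single k 1)

def KKT1 {n m : ℕ} (f : (Fin n → ℝ) → ℝ) (G : (Fin n → ℝ) → Matrix (Fin m) (Fin m) ℝ)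
    (x : Fin n → ℝ) (Λ : Matrix (Fin m) (Fin m) ℝ) : Prop :=
  gradf f x = adjDG G x Λ ∧ Λ.PosSemidef ∧ (G x).PosSemidef ∧ jmul Λ (G x) = 0

def KKT2 {n m : ℕ} (f : (Fin n → ℝ) → ℝ) (G : (Fin n → ℝ) → Matrix (Fin m) (Fin m) ℝ)
    (x : Fin n → ℝ) (Y Λ : Matrix (Fin m) (Fin m) ℝ) : Prop :=
  gradf f x = adjDG G x Λ ∧ jmul Λ Y = 0 ∧ G x = jmul Y Y

def hessQ {n m : ℕ} (f : (Fin n → ℝ) → ℝ) (G : (Fin n → ℝ) → Matrix (Fin m) (Fin m) ℝ)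
    (Λ : Matrix (Fin m) (Fin m) ℝ) (x v : Fin n → ℝ) : ℝ :=
  iteratedFDeriv ℝ 2 (fun y => f y - minner (G y) Λ) x ![v, v]

def SOSCNLP {n m : ℕ} (f : (Fin n → ℝ) → ℝ) (G : (Fin n → ℝ) → Matrix (Fin m) (Fin m) ℝ)
    (x : Fin n → ℝ) (Y Λ : Matrix (Fin m) (Fin m) ℝ) : Prop :=
  ∀ (v : Fin n → ℝ) (W : Matrix (Fin m) (Fin m) ℝ), W.IsSymm →
    ¬(v = 0 ∧ W = 0) → dirDerivG G x v = (2 : ℝ) • jmul Y W →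
    0 < hessQ f G Λ x v + 2 * minner (jmul W W) Λ

def SONCNLP {n m : ℕ} (f : (Fin n → ℝ) → ℝ) (G : (Fin n → ℝ) → Matrix (Fin m) (Fin m) ℝ)
    (x : Fin n → ℝ) (Y Λ : Matrix (Fin m) (Fin m) ℝ) : Prop :=
  ∀ (v : Fin n → ℝ) (W : Matrix (Fin m) (Fin m) ℝ), W.IsSymm →
    dirDerivG G x v = (2 : ℝ) • jmul Y W →
    0 ≤ hessQ f G Λ x v + 2 * minner (jmul W W) Λ

def LICQ {n m : ℕ} (G : (Fin n → ℝ) → Matrix (Fin m) (Fin m) ℝ)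
    (x : Fin n → ℝ) (Y : Matrix (Fin m) (Fin m) ℝ) : Prop :=
  ∀ W : Matrix (Fin m) (Fin m) ℝ, W.IsSymm → jmul Y W = 0 → adjDG G x W = 0 → W = 0

def Nondeg {n m : ℕ} (G : (Fin n → ℝ) → Matrix (Fin m) (Fin m) ℝ)
    (x : Fin n → ℝ) : Prop :=
  ∀ W : Matrix (Fin m) (Fin m) ℝ, W.IsSymm → G x * W = 0 → adjDG G x W = 0 → W = 0

def CritCone {n m : ℕ} (f : (Fin n → ℝ) → ℝ) (G : (Fin n → ℝ) → Matrix (Fin m) (Fin m) ℝ)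
    (x : Fin n → ℝ) : Set (Fin n → ℝ) :=
  {d | (∀ u : Fin m → ℝ, G x *ᵥ u = 0 → 0 ≤ u ⬝ᵥ (dirDerivG G x d *ᵥ u)) ∧
    gradf f x ⬝ᵥ d = 0}

def IsMPInv {m : ℕ} (A P : Matrix (Fin m) (Fin m) ℝ) : Prop :=
  A * P * A = A ∧ P * A * P = P ∧ (A * P)ᵀ = A * P ∧ (P * A)ᵀ = P * A

def Hmat {n m : ℕ} (G : (Fin n → ℝ) → Matrix (Fin m) (Fin m) ℝ)
    (x : Fin n → ℝ) (Λ P : Matrix (Fin m) (Fin m) ℝ) : Matrix (Fin n) (Fin n) ℝ :=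
  Matrix.of fun i j => 2 * (pderivG G x i * P * pderivG G x j * Λ).trace

/-!
Taking `v = 0` in SOSC-NLP gives `tr (W² Λ) > 0` for every nonzero symmetric `W` with
`Y ∘ W = 0`. For `W = YΛY` we do have `Y ∘ W = 0`, but `tr (W² Λ) = 0` because `Λ` anticommutes
with `Y`; hence `YΛY = 0`, which forces `YΛ = 0` and so `Λ G(x) = 0` for `G(x) = Y²`.
For `W = u uᵀ` with `Y u = 0` the inequality says that `Λ` is positive definite on `ker Y`.
Since `Λ` maps into `ker Y`, this makes `Λ` positive semidefinite and `Y² + Λ` positive definite.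
An invertible sum of two matrices with zero product has ranks adding up to the dimension.
-/

namespace Matrix

variable {n : Type*} [Fintype n]

lemma trace_mul_eq_zero_of_mul_eq_neg {A B : Matrix n n ℝ}
    (h : A * B = -(B * A)) : (A * B).trace = 0 := by
  have h2 := congrArg trace h
  rw [trace_neg, trace_mul_comm B A] at h2
  linarith

lemma posSemidef_of_mul_eq_zero_of_pos_on_ker [DecidableEq n] {Λ Y : Matrix n n ℝ}
    (hΛ : Λ.IsHermitian) (hYΛ : Y * Λ = 0)
    (hpos : ∀ u, u ≠ 0 → Y *ᵥ u = 0 → 0 < u ⬝ᵥ (Λ *ᵥ u)) : Λ.PosSemidef := by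
  refine hΛ.posSemidef_iff_eigenvalues_nonneg.mpr fun i => ?_
  by_contra! hneg : hΛ.eigenvalues i < 0
  set v : n → ℝ := ⇑(hΛ.eigenvectorBasis i)
  have hv : Λ *ᵥ v = hΛ.eigenvalues i • v := hΛ.mulVec_eigenvectorBasis i
  have hv0 : v ≠ 0 := (WithLp.ofLp_eq_zero 2).ne.2 (hΛ.eigenvectorBasis.orthonormal.ne_zero i)
  have hYv : Y *ᵥ v = 0 := by
    have hYΛv : Y *ᵥ (Λ *ᵥ v) = 0 := by rw [mulVec_mulVec, hYΛ, zero_mulVec]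
    rwa [hv, mulVec_smul, smul_eq_zero, or_iff_right hneg.ne] at hYΛv
  have hvv := hpos v hv0 hYv
  rw [hv, dotProduct_smul, smul_eq_mul] at hvv
  have hvv' : 0 ≤ v ⬝ᵥ v := by simpa using dotProduct_star_self_nonneg v
  nlinarith

lemma PosSemidef.add_posDef_of_pos_on_ker {A B : Matrix n n ℝ} (hA : A.PosSemidef)
    (hB : B.PosSemidef) (hpos : ∀ u, u ≠ 0 → A *ᵥ u = 0 → 0 < u ⬝ᵥ (B *ᵥ u)) :
    (A + B).PosDef := by
  refine posDef_iff_dotProduct_mulVec.mpr ⟨hA.1.add hB.1, fun u hu => ?_⟩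
  have hAu := (posSemidef_iff_dotProduct_mulVec.mp hA).2 u
  have hBu := (posSemidef_iff_dotProduct_mulVec.mp hB).2 u
  rw [add_mulVec, dotProduct_add]
  by_cases hAu0 : A *ᵥ u = 0
  · rw [hAu0, dotProduct_zero, zero_add]
    simpa using hpos u hu hAu0
  · have hAu' := (hA.dotProduct_mulVec_zero_iff u).not.mpr hAu0
    exact add_pos_of_pos_of_nonneg (hAu.lt_of_ne' hAu') hBu

lemma rank_add_le {K m : Type*} [Field K] [Finite m] (A B : Matrix m n K) :
    (A + B).rank ≤ A.rank + B.rank := by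
  rw [rank, rank, rank, mulVecLin_add]
  exact (Submodule.finrank_mono (LinearMap.range_add_le _ _)).trans
    (Submodule.finrank_add_le_finrank_add_finrank _ _)

lemma rank_add_rank_eq_card_of_mul_eq_zero {K : Type*} [Field K] [DecidableEq n]
    {A B : Matrix n n K} (hAB : A * B = 0) (h : IsUnit (A + B)) :
    A.rank + B.rank = Fintype.card n :=
  (rank_add_rank_le_card_of_mul_eq_zero hAB).antisymm (rank_of_isUnit _ h ▸ rank_add_le A B)

end Matrix

lemma jmul_self {m : ℕ} (A : Matrix (Fin m) (Fin m) ℝ) : jmul A A = A * A := by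
  rw [jmul, ← two_smul ℝ (A * A), smul_smul]
  norm_num

lemma jmul_eq_zero_iff {m : ℕ} {A B : Matrix (Fin m) (Fin m) ℝ} :
    jmul A B = 0 ↔ A * B + B * A = 0 := by
  rw [jmul, smul_eq_zero]
  norm_num

lemma memPhi_iff {m : ℕ} {Λ Y : Matrix (Fin m) (Fin m) ℝ} :
    memPhi Λ Y ↔ ∀ W : Matrix (Fin m) (Fin m) ℝ, W.IsSymm → W ≠ 0 → Y * W + W * Y = 0 →
      0 < (W * W * Λ).trace := by
  simp only [memPhi, jmul_self, jmul_eq_zero_iff, minner]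

lemma SOSCNLP.memPhi {n m : ℕ} {f : (Fin n → ℝ) → ℝ} {G : (Fin n → ℝ) → Matrix (Fin m) (Fin m) ℝ}
    {x : Fin n → ℝ} {Y Λ : Matrix (Fin m) (Fin m) ℝ} (h : SOSCNLP f G x Y Λ) : memPhi Λ Y := by
  intro W hW hW0 hYW
  have hess : hessQ f G Λ x 0 = 0 :=
    (iteratedFDeriv ℝ 2 (fun y => f y - minner (G y) Λ) x).map_coord_zero (0 : Fin 2) rfl
  have hpos := h 0 W hW (fun h0 => hW0 h0.2) (by simp [dirDerivG, hYW])
  rw [hess] at hpos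
  linarith

lemma mul_eq_zero_of_memPhi {m : ℕ} {Λ Y : Matrix (Fin m) (Fin m) ℝ} (hY : Y.IsSymm)
    (hΛ : Λ.IsSymm) (hanti : Λ * Y = -(Y * Λ)) (hΦ : memPhi Λ Y) : Y * Λ = 0 := by
  have hanti' (M : Matrix (Fin m) (Fin m) ℝ) : Λ * (Y * M) = -(Y * (Λ * M)) := by
    rw [← Matrix.mul_assoc, hanti, Matrix.neg_mul, Matrix.mul_assoc]
  have hW : Y * Λ * Y = 0 := by
    by_contra hW0
    have hWsymm : (Y * Λ * Y).IsSymm := by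
      simp only [IsSymm, transpose_mul, hY.eq, hΛ.eq, Matrix.mul_assoc]
    have hYW : Y * (Y * Λ * Y) + Y * Λ * Y * Y = 0 := by
      calc _ = Y * (Λ * Y + Y * Λ) * Y := by noncomm_ring
        _ = 0 := by rw [hanti, neg_add_cancel, Matrix.mul_zero, Matrix.zero_mul]
    have htrace : (Y * Λ * Y * (Y * Λ * Y) * Λ).trace = 0 := by
      rw [show Y * Λ * Y * (Y * Λ * Y) * Λ = Y * (Λ * Y * Y * Λ * Y * Λ) by
        simp only [Matrix.mul_assoc]]
      apply trace_mul_eq_zero_of_mul_eq_neg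
      simp only [Matrix.mul_assoc, hanti', hanti, Matrix.mul_neg, Matrix.neg_mul, neg_neg]
    exact (memPhi_iff.mp hΦ _ hWsymm hW0 hYW).ne' htrace
  have hYYΛ : Yᴴ * Y * Λ = 0 := by
    rw [conjTranspose_eq_transpose_of_trivial, hY.eq, Matrix.mul_assoc, ← neg_eq_zero,
      ← Matrix.mul_neg, ← hanti, ← Matrix.mul_assoc, hW]
  exact (conjTranspose_mul_self_mul_eq_zero Y Λ).mp hYYΛ

lemma dotProduct_mulVec_pos_of_memPhi {m : ℕ} {Λ Y : Matrix (Fin m) (Fin m) ℝ} (hY : Y.IsSymm)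
    (hΦ : memPhi Λ Y) {u : Fin m → ℝ} (hu : u ≠ 0) (hYu : Y *ᵥ u = 0) :
    0 < u ⬝ᵥ (Λ *ᵥ u) := by
  have hWsymm : (vecMulVec u u).IsSymm := by
    ext i j; simp [vecMulVec_apply, mul_comm]
  have hYW : Y * vecMulVec u u + vecMulVec u u * Y = 0 := by
    rw [mul_vecMulVec, vecMulVec_mul, ← mulVec_transpose, hY.eq, hYu]
    simp
  have hpos := memPhi_iff.mp hΦ _ hWsymm (by simpa using hu) hYW
  rw [vecMulVec_mul_vecMulVec, vecMulVec_mul, trace_vecMulVec, smul_vecMul, dotProduct_smul,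
    dotProduct_comm u (u ᵥ* Λ), ← dotProduct_mulVec, smul_eq_mul] at hpos
  have huu : 0 < u ⬝ᵥ u := by
    simpa using dotProduct_star_self_pos_iff.mpr hu
  exact pos_of_mul_pos_right hpos huu.le

theorem stmt8_general {n m : ℕ} (f : (Fin n → ℝ) → ℝ) (G : (Fin n → ℝ) → Matrix (Fin m) (Fin m) ℝ)
    (x : Fin n → ℝ) (Y Λ : Matrix (Fin m) (Fin m) ℝ)
    (hY : Y.IsSymm) (hΛ : Λ.IsSymm) (hKKT : KKT2 f G x Y Λ)
    (hsosc : SOSCNLP f G x Y Λ) :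
    KKT1 f G x Λ ∧ (G x).rank + Λ.rank = m := by
  obtain ⟨hgrad, hΛY, hGx⟩ := hKKT
  rw [jmul_self] at hGx
  have hΦ := hsosc.memPhi
  have hanti : Λ * Y = -(Y * Λ) := eq_neg_of_add_eq_zero_left (jmul_eq_zero_iff.mp hΛY)
  have hYΛ : Y * Λ = 0 := mul_eq_zero_of_memPhi hY hΛ hanti hΦ
  have hGΛ : G x * Λ = 0 := by rw [hGx, Matrix.mul_assoc, hYΛ, Matrix.mul_zero]
  have hΛG : Λ * G x = 0 := by
    rw [hGx, ← Matrix.mul_assoc, hanti, hYΛ, neg_zero, Matrix.zero_mul]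
  have hker (u : Fin m → ℝ) (hu : u ≠ 0) (hYu : Y *ᵥ u = 0) : 0 < u ⬝ᵥ (Λ *ᵥ u) :=
    dotProduct_mulVec_pos_of_memPhi hY hΦ hu hYu
  have hΛpsd : Λ.PosSemidef :=
    posSemidef_of_mul_eq_zero_of_pos_on_ker (isHermitian_iff_isSymm.mpr hΛ) hYΛ hker
  have hGpsd : (G x).PosSemidef := by
    simpa [hGx, hY.eq] using posSemidef_conjTranspose_mul_self Y
  have hPD : (G x + Λ).PosDef := hGpsd.add_posDef_of_pos_on_ker hΛpsd fun u hu hGu =>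
    hker u hu <| (conjTranspose_mul_self_mulVec_eq_zero Y u).mp <| by simpa [hGx, hY.eq] using hGu
  refine ⟨⟨hgrad, hΛpsd, hGpsd, by rw [jmul, hΛG, hGΛ, add_zero, smul_zero]⟩, ?_⟩
  simpa using rank_add_rank_eq_card_of_mul_eq_zero hGΛ hPD.isUnit

theorem stmt8 {n m : ℕ} (f : (Fin n → ℝ) → ℝ) (G : (Fin n → ℝ) → Matrix (Fin m) (Fin m) ℝ)
    (hf : ContDiff ℝ 2 f) (hG : ∀ i j, ContDiff ℝ 2 fun y => G y i j)
    (x : Fin n → ℝ) (Y Λ : Matrix (Fin m) (Fin m) ℝ)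
    (hY : Y.IsSymm) (hΛ : Λ.IsSymm) (hKKT : KKT2 f G x Y Λ)
    (hsosc : SOSCNLP f G x Y Λ) :
    KKT1 f G x Λ ∧ (G x).rank + Λ.rank = m :=
  stmt8_general f G x Y Λ hY hΛ hKKT hsosc
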